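/- Every Malcev algebra over a field F with char F ≠ 2 is 3-mixing. Consequently, if A is a finite-dimensional Malcev algebra over such a field with dim A = d ≥ 2, then l(A) ≤ 2d. -/

import Mathlib

/-!
Linearising the Malcev identity in its repeated variable (substituting `x + yᵢ`) and specialising
the other two variables to `yⱼ, yₖ` gives an identity whose only terms outside `D₀` are
`((yᵢ yⱼ) yₖ) x` and `((yⱼ yₖ) yᵢ) x`. So their sum lies in the span of the `D₀`-values; adding up
the three cyclic rotations and dividing by `2`, each of them does. Anticommutativity turns every
word `x · u` or `u · x` into `±` such a word.

For the length bound, `3`-mixing rewrites a product `a · b` of words whose factors both have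
length `≥ 3` as a combination of shorter words and of products whose shorter factor is strictly
shorter. Hence `L_n(S)` is spanned by `3`-bounded words, which split as `u · c` or `c · u` with
`|c| ≤ 2`. So once `L_t = L_{t+1} = L_{t+2}` the filtration is constant from `t` on and `L_t = A`:
the dimension of `L_t` grows every two steps until `L_t = A`, whence `L_{2d-1} = A`.
-/

namespace P

/-- The list of leaves (letters) of a nonassociative word, in order. -/
def leafList {α : Type*} : FreeMagma α → List α
  | .of a => [a]
  | .mul x y => leafList x ++ leafList y

/-- The length of a nonassociative word: the number of factors. -/
def wlen {α : Type*} (w : FreeMagma α) : ℕ := (leafList w).length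

/-- Evaluation of a formal word with letters in a magma `A`. -/
def evalA {A : Type*} [Mul A] (w : FreeMagma A) : A :=
  FreeMagma.lift (id : A → A) w

/-- Evaluation of a formal word in variables `Fin n` under an assignment `v`. -/
def evalVar {A : Type*} [Mul A] {n : ℕ} (v : Fin n → A) (w : FreeMagma (Fin n)) : A :=
  FreeMagma.lift v w

/-- `w` is a word in the set `S`: all its letters belong to `S`. -/
def HasLeavesIn {A : Type*} (S : Set A) (w : FreeMagma A) : Prop :=
  ∀ a ∈ leafList w, a ∈ S

/-- `L_i(S)`: the span of all values of words in `S` of length at most `i`.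
For `i = 0` this is `0`, since every word has length at least 1. -/
def Lspan (F : Type*) {A : Type*} [Field F] [NonUnitalNonAssocRing A] [Module F A]
    (S : Set A) (i : ℕ) : Submodule F A :=
  Submodule.span F { a | ∃ w : FreeMagma A, HasLeavesIn S w ∧ wlen w ≤ i ∧ evalA w = a }

/-- `S` is a generating set of the algebra `A`. -/
def Generates (F : Type*) {A : Type*} [Field F] [NonUnitalNonAssocRing A] [Module F A]
    (S : Set A) : Prop :=
  Submodule.span F { a | ∃ w : FreeMagma A, HasLeavesIn S w ∧ evalA w = a } = ⊤

/-- The length `l(S)` of a generating set: the least `k` with `L_k(S) = A`. -/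
noncomputable def lenS (F : Type*) {A : Type*} [Field F] [NonUnitalNonAssocRing A] [Module F A]
    (S : Set A) : ℕ :=
  sInf { k | Lspan F S k = ⊤ }

/-- The characteristic sequence of a generating set `S`, as a predicate on a
nondecreasing sequence `m : Fin d → ℕ`. -/
def IsCharSeq (F : Type*) {A : Type*} [Field F] [NonUnitalNonAssocRing A] [Module F A]
    (S : Set A) {d : ℕ} (m : Fin d → ℕ) : Prop :=
  Monotone m ∧ (∀ j, 1 ≤ m j) ∧
    ∀ t : ℕ, 1 ≤ t →
      (Finset.univ.filter fun j => m j = t).card =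
        Module.finrank F (Lspan F S t) - Module.finrank F (Lspan F S (t - 1))

/-- `w` is a multilinear word using each variable of `T` exactly once. -/
def IsMultilinearOn {n : ℕ} (T : Finset (Fin n)) (w : FreeMagma (Fin n)) : Prop :=
  (leafList w : Multiset (Fin n)) = T.val

/-- Membership in `D_0(z_0,…,z_k)`: multilinear words in `z_0,…,z_k` except those of
length `k+1` in which `z_0` is a factor of the last multiplication. -/
def InD0 {k : ℕ} (w : FreeMagma (Fin (k + 1))) : Prop :=
  (leafList w : Multiset (Fin (k + 1))).Nodup ∧
    ¬∃ u : FreeMagma (Fin (k + 1)),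
        IsMultilinearOn (Finset.univ.erase 0) u ∧
          (w = FreeMagma.of 0 * u ∨ w = u * FreeMagma.of 0)

/-- Membership in `D_l(z_0,…,z_k)`: multilinear words in `z_0,…,z_k` except those of
length `k+1` in which `z_0` occurs in the first factor of the last multiplication. -/
def InDl {k : ℕ} (w : FreeMagma (Fin (k + 1))) : Prop :=
  (leafList w : Multiset (Fin (k + 1))).Nodup ∧
    ¬((leafList w : Multiset (Fin (k + 1))) = (Finset.univ : Finset (Fin (k + 1))).val ∧
      ∃ w1 w2 : FreeMagma (Fin (k + 1)), w = w1 * w2 ∧ (0 : Fin (k + 1)) ∈ leafList w1)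

/-- Membership in `D_r(z_0,…,z_k)`: multilinear words in `z_0,…,z_k` except those of
length `k+1` in which `z_0` occurs in the second factor of the last multiplication. -/
def InDr {k : ℕ} (w : FreeMagma (Fin (k + 1))) : Prop :=
  (leafList w : Multiset (Fin (k + 1))).Nodup ∧
    ¬((leafList w : Multiset (Fin (k + 1))) = (Finset.univ : Finset (Fin (k + 1))).val ∧
      ∃ w1 w2 : FreeMagma (Fin (k + 1)), w = w1 * w2 ∧ (0 : Fin (k + 1)) ∈ leafList w2)

/-- The algebra `A` is `k`-mixing. -/
def IsKMixing (F A : Type*) [Field F] [NonUnitalNonAssocRing A] [Module F A] (k : ℕ) : Prop :=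
  ∀ (x : A) (y : Fin k → A) (w : FreeMagma (Fin (k + 1))),
    (∃ u, IsMultilinearOn (Finset.univ.erase 0) u ∧
        (w = FreeMagma.of 0 * u ∨ w = u * FreeMagma.of 0)) →
      evalVar (Fin.cons x y) w ∈
        Submodule.span F
          { a | ∃ z : FreeMagma (Fin (k + 1)), InD0 z ∧ evalVar (Fin.cons x y) z = a }

/-- The algebra `A` is `k`-sliding. -/
def IsKSliding (F A : Type*) [Field F] [NonUnitalNonAssocRing A] [Module F A] (k : ℕ) : Prop :=
  (∀ (x : A) (y : Fin k → A) (u : FreeMagma (Fin (k + 1))),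
      IsMultilinearOn (Finset.univ.erase 0) u →
        evalVar (Fin.cons x y) (u * FreeMagma.of 0) ∈
          Submodule.span F
            { a | ∃ z : FreeMagma (Fin (k + 1)), InDl z ∧ evalVar (Fin.cons x y) z = a }) ∨
  (∀ (x : A) (y : Fin k → A) (u : FreeMagma (Fin (k + 1))),
      IsMultilinearOn (Finset.univ.erase 0) u →
        evalVar (Fin.cons x y) (FreeMagma.of 0 * u) ∈
          Submodule.span F
            { a | ∃ z : FreeMagma (Fin (k + 1)), InDr z ∧ evalVar (Fin.cons x y) z = a })

/-- `u` is a subword of `w`. -/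
inductive IsSubword {A : Type*} : FreeMagma A → FreeMagma A → Prop
  | refl (w : FreeMagma A) : IsSubword w w
  | left {s u : FreeMagma A} (v : FreeMagma A) : IsSubword s u → IsSubword s (u * v)
  | right (u : FreeMagma A) {s v : FreeMagma A} : IsSubword s v → IsSubword s (u * v)

/-- `IsSprout w L`: `L` is a sprout sequence of the word `w` (with the convention that
words of length 1 have the empty sprout sequence). -/
inductive IsSprout {A : Type*} : FreeMagma A → List (FreeMagma A) → Prop
  | single (a : A) : IsSprout (FreeMagma.of a) []
  | cons_l {u v : FreeMagma A} {L : List (FreeMagma A)} :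
      wlen u ≤ wlen v → IsSprout v L → IsSprout (u * v) (u :: L)
  | cons_r {u v : FreeMagma A} {L : List (FreeMagma A)} :
      wlen v ≤ wlen u → IsSprout u L → IsSprout (u * v) (v :: L)

/-- A word is `k`-bounded if it has length 1 or admits an `l`-sprout sequence all of whose
terms are strictly less than `k`. -/
def KBounded {A : Type*} (k : ℕ) (w : FreeMagma A) : Prop :=
  ∃ L : List (FreeMagma A), IsSprout w L ∧ ∀ u ∈ L, wlen u < k

/-- A word `w` in `S` is irreducible if it does not lie in `L_m(S)` for any `m < l(w)`. -/
def Irred (F : Type*) {A : Type*} [Field F] [NonUnitalNonAssocRing A] [Module F A]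
    (S : Set A) (w : FreeMagma A) : Prop :=
  ∀ m : ℕ, m < wlen w → evalA w ∉ Lspan F S m

/-- The step function of a word: the least `t` such that `w` has a subword of
length `l(w) - 2t - 1`. -/
noncomputable def stepFn {A : Type*} (w : FreeMagma A) : ℕ :=
  sInf { t : ℕ | ∃ u : FreeMagma A, IsSubword u w ∧ wlen u + 2 * t + 1 = wlen w }

/-- `w` is a `p`-step word for the generating set `S`. -/
def IsPStepWord (F : Type*) {A : Type*} [Field F] [NonUnitalNonAssocRing A] [Module F A]
    (S : Set A) (w : FreeMagma A) (p : ℕ) : Prop :=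
  HasLeavesIn S w ∧ Irred F S w ∧ KBounded 3 w ∧ stepFn w = p ∧
    ∀ v : FreeMagma A, HasLeavesIn S v → Irred F S v → KBounded 3 v → wlen v = wlen w →
      p ≤ stepFn v

/-- `A` is `k`-round: `x · v = 0` for every product `v` of `k` elements. -/
def IsKRound (A : Type*) [NonUnitalNonAssocRing A] (k : ℕ) : Prop :=
  ∀ (x : A) (w : FreeMagma A), wlen w = k → x * evalA w = 0

/-- `A` is `k`-based. -/
def IsKBased (A : Type*) [NonUnitalNonAssocRing A] (k : ℕ) : Prop :=
  ∀ (x : A) (u v : FreeMagma A), wlen u + wlen v = k →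
    x * (evalA u * evalA v) = evalA u * (x * evalA v) ∧
      (evalA u * evalA v) * x = (evalA u * x) * evalA v

/-- The set `P(x,y,z)`. -/
def Pset {A : Type*} [Mul A] (x y z : A) : Set A :=
  {(x*z)*y, (z*x)*y, (y*z)*x, (z*y)*x, x*(z*y), x*(y*z), y*(x*z), y*(z*x),
    x*y, y*x, x*z, z*x, y*z, z*y, x, y, z}

/-- The set `Q_l(x,y,z)`. -/
def Qlset {A : Type*} [Mul A] (x y z : A) : Set A :=
  {x*(z*y), x*(y*z), y*(x*z), y*(z*x), x*y, y*x, x*z, z*x, y*z, z*y, x, y, z}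

/-- The set `Q_r(x,y,z)`. -/
def Qrset {A : Type*} [Mul A] (x y z : A) : Set A :=
  {(x*z)*y, (z*x)*y, (y*z)*x, (z*y)*x, x*y, y*x, x*z, z*x, y*z, z*y, x, y, z}

/-- `A` is a mixing algebra. -/
def IsMixingAlg (F A : Type*) [Field F] [NonUnitalNonAssocRing A] [Module F A] : Prop :=
  ∀ x y z : A, (x*y)*z ∈ Submodule.span F (Pset x y z) ∧
    z*(x*y) ∈ Submodule.span F (Pset x y z)

/-- `A` is a sliding algebra. -/
def IsSlidingAlg (F A : Type*) [Field F] [NonUnitalNonAssocRing A] [Module F A] : Prop :=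
  (∀ x y z : A, z*(x*y) ∈ Submodule.span F (Qrset x y z)) ∨
  (∀ x y z : A, (x*y)*z ∈ Submodule.span F (Qlset x y z))


section Words
variable {α : Type*}

@[simp] theorem leafList_of (a : α) : leafList (FreeMagma.of a) = [a] := rfl

@[simp] theorem leafList_mul (x y : FreeMagma α) :
    leafList (x * y) = leafList x ++ leafList y := rfl

@[simp] theorem wlen_of (a : α) : wlen (FreeMagma.of a) = 1 := rfl

@[simp] theorem wlen_mul (x y : FreeMagma α) : wlen (x * y) = wlen x + wlen y := by
  simp [wlen]

theorem wlen_pos (w : FreeMagma α) : 0 < wlen w := by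
  induction w with
  | ih1 a => simp
  | ih2 x y ihx _ => rw [wlen_mul]; omega

theorem eq_of_leafList_eq_singleton {w : FreeMagma α} {a : α} (h : leafList w = [a]) :
    w = FreeMagma.of a := by
  cases w with
  | of b => simp only [leafList_of, List.cons.injEq, and_true] at h; rw [h]
  | mul x y =>
    have := congrArg List.length h
    have := wlen_pos x
    have := wlen_pos y
    simp only [wlen] at *
    simp at *
    omega

@[simp] theorem hasLeavesIn_mul_iff {S : Set α} {x y : FreeMagma α} :
    HasLeavesIn S (x * y) ↔ HasLeavesIn S x ∧ HasLeavesIn S y := by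
  simp [HasLeavesIn, or_imp, forall_and]

@[simp] theorem evalA_mul {A : Type*} [Mul A] (x y : FreeMagma A) :
    evalA (x * y) = evalA x * evalA y := rfl

@[simp] theorem evalVar_of {A : Type*} [Mul A] {n : ℕ} (v : Fin n → A) (i : Fin n) :
    evalVar v (FreeMagma.of i) = v i := rfl

@[simp] theorem evalVar_mul {A : Type*} [Mul A] {n : ℕ} (v : Fin n → A)
    (x y : FreeMagma (Fin n)) : evalVar v (x * y) = evalVar v x * evalVar v y := rfl

end Words

section Shapes
variable {α : Type*}

theorem exists_eq_of_wlen_eq_one {w : FreeMagma α} (h : wlen w = 1) :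
    ∃ a, w = FreeMagma.of a :=
  (List.length_eq_one_iff.mp h).imp fun _ => eq_of_leafList_eq_singleton

theorem exists_eq_of_wlen_eq_two {w : FreeMagma α} (h : wlen w = 2) :
    ∃ a b, w = FreeMagma.of a * FreeMagma.of b := by
  cases w with
  | of a => simp at h
  | mul x y =>
    rw [show x.mul y = x * y from rfl, wlen_mul] at *
    have := wlen_pos x
    have := wlen_pos y
    obtain ⟨a, rfl⟩ := exists_eq_of_wlen_eq_one (w := x) (by omega)
    obtain ⟨b, rfl⟩ := exists_eq_of_wlen_eq_one (w := y) (by omega)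
    exact ⟨a, b, rfl⟩

theorem exists_eq_of_wlen_eq_three {w : FreeMagma α} (h : wlen w = 3) :
    ∃ a b c, w = (FreeMagma.of a * FreeMagma.of b) * FreeMagma.of c ∨
      w = FreeMagma.of a * (FreeMagma.of b * FreeMagma.of c) := by
  cases w with
  | of a => simp at h
  | mul x y =>
    rw [show x.mul y = x * y from rfl, wlen_mul] at *
    have := wlen_pos x
    have := wlen_pos y
    rcases (by omega : wlen x = 2 ∧ wlen y = 1 ∨ wlen x = 1 ∧ wlen y = 2) with
      ⟨hx, hy⟩ | ⟨hx, hy⟩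
    · obtain ⟨a, b, rfl⟩ := exists_eq_of_wlen_eq_two hx
      obtain ⟨c, rfl⟩ := exists_eq_of_wlen_eq_one hy
      exact ⟨a, b, c, Or.inl rfl⟩
    · obtain ⟨a, rfl⟩ := exists_eq_of_wlen_eq_one hx
      obtain ⟨b, c, rfl⟩ := exists_eq_of_wlen_eq_two hy
      exact ⟨a, b, c, Or.inr rfl⟩

end Shapes

section Weight
variable {α : Type*}

/-- The length of the word obtained by substituting a word of length `ℓ a` for each letter `a`. -/
def weight (ℓ : α → ℕ) (w : FreeMagma α) : ℕ := ((leafList w).map ℓ).sum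

@[simp] theorem weight_of (ℓ : α → ℕ) (a : α) : weight ℓ (FreeMagma.of a) = ℓ a := by
  simp [weight]

@[simp] theorem weight_mul (ℓ : α → ℕ) (x y : FreeMagma α) :
    weight ℓ (x * y) = weight ℓ x + weight ℓ y := by
  simp [weight]

theorem weight_pos {ℓ : α → ℕ} (hℓ : ∀ a, 0 < ℓ a) (w : FreeMagma α) : 0 < weight ℓ w := by
  induction w with
  | ih1 a => simpa using hℓ a
  | ih2 x y ihx _ => rw [weight_mul]; omega

variable [DecidableEq α] {ℓ : α → ℕ} {w : FreeMagma α} {T : Finset α}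

theorem weight_eq_sum_toFinset (hnd : (leafList w).Nodup) :
    weight ℓ w = ∑ a ∈ (leafList w).toFinset, ℓ a :=
  (List.sum_toFinset ℓ hnd).symm

theorem weight_le_sum (hnd : (leafList w).Nodup) (hT : ∀ a ∈ leafList w, a ∈ T) :
    weight ℓ w ≤ ∑ a ∈ T, ℓ a := by
  rw [weight_eq_sum_toFinset hnd]
  exact Finset.sum_le_sum_of_subset (fun a ha => hT a (List.mem_toFinset.mp ha))

theorem weight_lt_sum (hℓ : ∀ a ∈ T, 0 < ℓ a) (hnd : (leafList w).Nodup)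
    (hT : ∀ a ∈ leafList w, a ∈ T) (hne : (leafList w : Multiset α) ≠ T.val) :
    weight ℓ w < ∑ a ∈ T, ℓ a := by
  have hsub : (leafList w).toFinset ⊆ T := fun a ha => hT a (List.mem_toFinset.mp ha)
  obtain ⟨b, hbT, hb⟩ : ∃ b ∈ T, b ∉ (leafList w).toFinset := by
    by_contra! h
    refine hne ?_
    rw [← Finset.Subset.antisymm hsub h, List.toFinset_val, List.dedup_eq_self.mpr hnd]
  rw [weight_eq_sum_toFinset hnd]
  exact Finset.sum_lt_sum_of_subset hsub hbT hb (hℓ b hbT) (fun _ _ _ => Nat.zero_le _)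

end Weight

section D0

/-- `z₂` avoids `0`, and misses a variable because `z₁` has a second letter. -/
theorem weight_right_lt_of_zero_mem_left {k : ℕ} {ℓ : Fin (k + 1) → ℕ} (hℓ : ∀ i, 0 < ℓ i)
    {z₁ z₂ : FreeMagma (Fin (k + 1))} (hnd : (leafList (z₁ * z₂)).Nodup)
    (hfull : (leafList (z₁ * z₂) : Multiset (Fin (k + 1))) = Finset.univ.val)
    (h0 : 0 ∈ leafList z₁) (hz₁ : z₁ ≠ FreeMagma.of 0) :
    weight ℓ z₂ < ∑ i : Fin k, ℓ i.succ := by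
  rw [leafList_mul, List.nodup_append] at hnd
  have hT : ∀ a ∈ leafList z₂, a ∈ Finset.univ.erase 0 := fun a ha =>
    Finset.mem_erase.mpr ⟨fun h => hnd.2.2 0 h0 a ha (h ▸ rfl), Finset.mem_univ a⟩
  have hne : (leafList z₂ : Multiset (Fin (k + 1))) ≠ (Finset.univ.erase 0).val := by
    intro h
    refine hz₁ (eq_of_leafList_eq_singleton (Multiset.coe_eq_singleton.mp ?_))
    have huniv : (Finset.univ : Finset (Fin (k + 1))).val = {0} + (Finset.univ.erase 0).val := by
      rw [Finset.erase_val, Multiset.singleton_add, Multiset.cons_erase (Finset.mem_univ_val 0)]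
    rw [leafList_mul, ← Multiset.coe_add, h, huniv] at hfull
    exact add_right_cancel hfull
  have hlt := weight_lt_sum (ℓ := ℓ) (fun i _ => hℓ i) hnd.2.1 hT hne
  have herase := Finset.sum_erase_add Finset.univ ℓ (Finset.mem_univ 0)
  rw [Fin.sum_univ_succ] at herase
  omega

theorem InD0.weight_lt_or_exists_mul {k : ℕ} (hk : k ≠ 0) {ℓ : Fin (k + 1) → ℕ}
    (hℓ : ∀ i, 0 < ℓ i) {z : FreeMagma (Fin (k + 1))} (hz : InD0 z) :
    weight ℓ z < ∑ i, ℓ i ∨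
      ∃ z₁ z₂, z = z₁ * z₂ ∧ min (weight ℓ z₁) (weight ℓ z₂) < ∑ i : Fin k, ℓ i.succ := by
  obtain ⟨hnd, hD0⟩ := hz
  rw [Multiset.coe_nodup] at hnd
  by_cases hfull : (leafList z : Multiset (Fin (k + 1))) = Finset.univ.val
  swap
  · exact Or.inl (weight_lt_sum (fun i _ => hℓ i) hnd (fun i _ => Finset.mem_univ i) hfull)
  right
  cases z with
  | of a =>
    have := congrArg Multiset.card hfull
    simp at this
    omega
  | mul z₁ z₂ =>
    rw [show z₁.mul z₂ = z₁ * z₂ from rfl] at *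
    refine ⟨z₁, z₂, rfl, ?_⟩
    have hfull' : (leafList (z₂ * z₁) : Multiset (Fin (k + 1))) = Finset.univ.val := by
      rw [← hfull]
      exact Multiset.coe_eq_coe.mpr List.perm_append_comm
    have hnd' : (leafList (z₂ * z₁)).Nodup := List.nodup_append_comm.mp hnd
    have h0 : (0 : Fin (k + 1)) ∈ leafList z₁ ++ leafList z₂ := by
      rw [← leafList_mul, ← Multiset.mem_coe, hfull]
      exact Finset.mem_univ_val 0
    rcases List.mem_append.mp h0 with h0 | h0
    · refine (weight_right_lt_of_zero_mem_left hℓ hnd hfull h0 ?_).trans_le' (min_le_right _ _)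
      rintro rfl
      refine hD0 ⟨z₂, ?_, Or.inl rfl⟩
      simp [IsMultilinearOn, Finset.erase_val, ← hfull]
    · refine (weight_right_lt_of_zero_mem_left hℓ hnd' hfull' h0 ?_).trans_le' (min_le_left _ _)
      rintro rfl
      refine hD0 ⟨z₁, ?_, Or.inr rfl⟩
      simp [IsMultilinearOn, Finset.erase_val, ← hfull']

theorem exists_eq_of_isMultilinearOn {u : FreeMagma (Fin 4)}
    (hu : IsMultilinearOn (Finset.univ.erase 0) u) :
    ∃ a b c : Fin 4, [0, a, b, c].Nodup ∧
      (u = (FreeMagma.of a * FreeMagma.of b) * FreeMagma.of c ∨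
        u = FreeMagma.of a * (FreeMagma.of b * FreeMagma.of c)) := by
  have hlen : wlen u = 3 := by simpa [wlen] using congrArg Multiset.card hu
  obtain ⟨a, b, c, habc⟩ := exists_eq_of_wlen_eq_three hlen
  have hleaves : ((([a, b, c] : List (Fin 4))) : Multiset (Fin 4)) = (Finset.univ.erase 0).val := by
    rcases habc with rfl | rfl <;> exact hu
  have hnodup : ∀ a b c : Fin 4,
      (([a, b, c] : List (Fin 4)) : Multiset (Fin 4)) = (Finset.univ.erase 0).val →
        [0, a, b, c].Nodup := by
    decide
  exact ⟨a, b, c, hnodup a b c hleaves, habc⟩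

theorem inD0_mul {k : ℕ} {w₁ w₂ : FreeMagma (Fin (k + 1))} (hnd : (leafList (w₁ * w₂)).Nodup)
    (h₁ : w₁ ≠ FreeMagma.of 0) (h₂ : w₂ ≠ FreeMagma.of 0) : InD0 (w₁ * w₂) := by
  refine ⟨Multiset.coe_nodup.mpr hnd, ?_⟩
  rintro ⟨u, -, h | h⟩
  · injection h with h
    exact h₁ h
  · injection h with _ h
    exact h₂ h

end D0

section Malcev
variable {F A : Type*} [Field F] [NonUnitalNonAssocRing A] [Module F A]

theorem malcev_linearized
    (hmal : ∀ x y z : A, (x*y)*(x*z) = ((x*y)*z)*x + ((y*z)*x)*x + ((z*x)*x)*y)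
    (x a b c : A) :
    (x*b)*(a*c) + (a*b)*(x*c) =
      ((x*b)*c)*a + ((a*b)*c)*x + ((b*c)*x)*a + ((b*c)*a)*x + ((c*x)*a)*b + ((c*a)*x)*b := by
  have h := hmal (x + a) b c
  simp only [add_mul, mul_add, hmal x b c, hmal a b c] at h
  rw [← sub_eq_zero] at h ⊢
  rw [← h]
  abel

theorem mem_of_cyclic_sums_mem (h2 : (2 : F) ≠ 0) {V : Submodule F A} {p q r : A}
    (hpq : p + q ∈ V) (hqr : q + r ∈ V) (hrp : r + p ∈ V) : p ∈ V := by
  have h : p = (2 : F)⁻¹ • ((p + q) - (q + r) + (r + p)) := by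
    rw [eq_inv_smul_iff₀ h2, two_smul]
    abel
  rw [h]
  exact V.smul_mem _ (add_mem (sub_mem hpq hqr) hrp)

theorem malcev_cyclic_pair_mem
    (hmal : ∀ x y z : A, (x*y)*(x*z) = ((x*y)*z)*x + ((y*z)*x)*x + ((z*x)*x)*y)
    {V : Submodule F A} {x a b c : A}
    (h₁ : (x*b)*(a*c) ∈ V) (h₂ : (a*b)*(x*c) ∈ V) (h₃ : ((x*b)*c)*a ∈ V)
    (h₄ : ((b*c)*x)*a ∈ V) (h₅ : ((c*x)*a)*b ∈ V) (h₆ : ((c*a)*x)*b ∈ V) :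
    ((a*b)*c)*x + ((b*c)*a)*x ∈ V := by
  have h : ((a*b)*c)*x + ((b*c)*a)*x =
      (x*b)*(a*c) + (a*b)*(x*c) - ((x*b)*c)*a - ((b*c)*x)*a - ((c*x)*a)*b - ((c*a)*x)*b := by
    rw [malcev_linearized hmal]
    abel
  rw [h]
  exact sub_mem (sub_mem (sub_mem (sub_mem (add_mem h₁ h₂) h₃) h₄) h₅) h₆

theorem isKMixing_three_of_malcev (hchar : (2 : F) ≠ 0) (hanti : ∀ x y : A, x * y = -(y * x))
    (hmal : ∀ x y z : A, (x*y)*(x*z) = ((x*y)*z)*x + ((y*z)*x)*x + ((z*x)*x)*y) :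
    IsKMixing F A 3 := by
  rintro x y w ⟨u, hu, hw⟩
  set v : Fin 4 → A := Fin.cons x y
  set V := Submodule.span F {a | ∃ z : FreeMagma (Fin 4), InD0 z ∧ evalVar v z = a}
  have hV : ∀ w₁ w₂ : FreeMagma (Fin 4),
      (leafList (w₁ * w₂)).Nodup ∧ w₁ ≠ .of 0 ∧ w₂ ≠ .of 0 →
        evalVar v w₁ * evalVar v w₂ ∈ V :=
    fun w₁ w₂ ⟨hnd, h₁, h₂⟩ => Submodule.subset_span ⟨_, inD0_mul hnd h₁ h₂, rfl⟩
  have hwords : ∀ i j k : Fin 4, [0, i, j, k].Nodup →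
      let good := fun w₁ w₂ : FreeMagma (Fin 4) =>
        (leafList (w₁ * w₂)).Nodup ∧ w₁ ≠ .of 0 ∧ w₂ ≠ .of 0
      good (.of 0 * .of j) (.of i * .of k) ∧ good (.of i * .of j) (.of 0 * .of k) ∧
        good (.of 0 * .of j * .of k) (.of i) ∧ good (.of j * .of k * .of 0) (.of i) ∧
        good (.of k * .of 0 * .of i) (.of j) ∧ good (.of k * .of i * .of 0) (.of j) := by
    decide
  have hpair : ∀ i j k : Fin 4, [0, i, j, k].Nodup →
      ((v i * v j) * v k) * v 0 + ((v j * v k) * v i) * v 0 ∈ V := fun i j k hijk => by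
    obtain ⟨h₁, h₂, h₃, h₄, h₅, h₆⟩ := hwords i j k hijk
    exact malcev_cyclic_pair_mem hmal (hV _ _ h₁) (hV _ _ h₂) (hV _ _ h₃) (hV _ _ h₄)
      (hV _ _ h₅) (hV _ _ h₆)
  have hrot : ∀ i j k : Fin 4, [0, i, j, k].Nodup → [0, j, k, i].Nodup := by decide
  have hG : ∀ i j k : Fin 4, [0, i, j, k].Nodup → ((v i * v j) * v k) * v 0 ∈ V :=
    fun i j k h => mem_of_cyclic_sums_mem hchar (hpair i j k h) (hpair j k i (hrot i j k h))
      (hpair k i j (hrot j k i (hrot i j k h)))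
  obtain ⟨a, b, c, habc, rfl | rfl⟩ := exists_eq_of_isMultilinearOn hu <;>
    rcases hw with rfl | rfl <;> simp only [evalVar_mul, evalVar_of]
  · rw [hanti]
    exact neg_mem (hG a b c habc)
  · exact hG a b c habc
  · rw [hanti (v a), mul_neg, hanti, neg_neg]
    exact hG b c a (hrot a b c habc)
  · rw [hanti (v a), neg_mul]
    exact neg_mem (hG b c a (hrot a b c habc))

end Malcev

section KBounded
variable {α : Type*} {k : ℕ}

theorem kBounded_of (a : α) : KBounded k (FreeMagma.of a) := ⟨[], IsSprout.single a, by simp⟩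

theorem kBounded_mul {a b : FreeMagma α} (ha : KBounded k a) (hb : KBounded k b)
    (h : wlen a < k ∨ wlen b < k) : KBounded k (a * b) := by
  obtain ⟨La, hsa, hla⟩ := ha
  obtain ⟨Lb, hsb, hlb⟩ := hb
  rcases le_or_gt (wlen a) (wlen b) with hab | hab
  · refine ⟨a :: Lb, IsSprout.cons_l hab hsb, ?_⟩
    simpa using ⟨by omega, hlb⟩
  · refine ⟨b :: La, IsSprout.cons_r hab.le hsa, ?_⟩
    simpa using ⟨by omega, hla⟩

theorem KBounded.exists_mul {w : FreeMagma α} (hw : KBounded k w) (h2 : 2 ≤ wlen w) :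
    ∃ u c : FreeMagma α, (w = u * c ∨ w = c * u) ∧ wlen c < k := by
  obtain ⟨L, hs, hl⟩ := hw
  cases hs with
  | single a => simp at h2
  | @cons_l c u L _ _ => exact ⟨u, c, Or.inr rfl, hl c List.mem_cons_self⟩
  | @cons_r u c L _ _ => exact ⟨u, c, Or.inl rfl, hl c List.mem_cons_self⟩

end KBounded

theorem exists_three_split {A : Type*} [Mul A] {S : Set A} {c : FreeMagma A}
    (hc : HasLeavesIn S c) (h3 : 3 ≤ wlen c) :
    ∃ (u : FreeMagma (Fin 4)) (q : Fin 3 → FreeMagma A),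
      IsMultilinearOn (Finset.univ.erase 0) u ∧ (∀ i, HasLeavesIn S (q i)) ∧
        ∑ i, wlen (q i) = wlen c ∧
          ∀ x : A, evalVar (Fin.cons x fun i => evalA (q i)) u = evalA c := by
  cases c with
  | of a => simp at h3
  | mul c₁ c₂ =>
    rw [show c₁.mul c₂ = c₁ * c₂ from rfl, wlen_mul] at *
    rw [hasLeavesIn_mul_iff] at hc
    have := wlen_pos c₁
    have := wlen_pos c₂
    rcases le_or_gt 2 (wlen c₁) with h₁ | h₁
    · cases c₁ with
      | of a => simp at h₁
      | mul c₁₁ c₁₂ =>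
        rw [show c₁₁.mul c₁₂ = c₁₁ * c₁₂ from rfl] at *
        refine ⟨(.of 1 * .of 2) * .of 3, ![c₁₁, c₁₂, c₂], by unfold IsMultilinearOn; decide,
          ?_, ?_, fun _ => rfl⟩
        · simp_all [Fin.forall_fin_succ]
        · simp [Fin.sum_univ_three, add_assoc]
    · cases c₂ with
      | of a => simp at h3; omega
      | mul c₂₁ c₂₂ =>
        rw [show c₂₁.mul c₂₂ = c₂₁ * c₂₂ from rfl] at *
        refine ⟨.of 1 * (.of 2 * .of 3), ![c₁, c₂₁, c₂₂], by unfold IsMultilinearOn; decide,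
          ?_, ?_, fun _ => rfl⟩
        · simp_all [Fin.forall_fin_succ]
        · simp [Fin.sum_univ_three, add_assoc]

section Span
variable {F A : Type*} [Field F] [NonUnitalNonAssocRing A] [Module F A] {S : Set A}

theorem Lspan_mono {i j : ℕ} (h : i ≤ j) : Lspan F S i ≤ Lspan F S j :=
  Submodule.span_mono fun _ ⟨w, hw, hwi, hev⟩ => ⟨w, hw, hwi.trans h, hev⟩

theorem evalA_mem_Lspan {w : FreeMagma A} (hw : HasLeavesIn S w) :
    evalA w ∈ Lspan F S (wlen w) :=
  Submodule.subset_span ⟨w, hw, le_rfl, rfl⟩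

variable (F S) in
def boundedSpan (n : ℕ) : Submodule F A :=
  Submodule.span F
    {a | ∃ w : FreeMagma A, HasLeavesIn S w ∧ KBounded 3 w ∧ wlen w ≤ n ∧ evalA w = a}

theorem boundedSpan_mono {i j : ℕ} (h : i ≤ j) : boundedSpan F S i ≤ boundedSpan F S j :=
  Submodule.span_mono fun _ ⟨w, hw, hk, hwi, hev⟩ => ⟨w, hw, hk, hwi.trans h, hev⟩

variable [SMulCommClass F A A] [IsScalarTower F A A]

theorem mul_mem_of_mem_span {s t : Set A} {p : Submodule F A} {x y : A}
    (hx : x ∈ Submodule.span F s) (hy : y ∈ Submodule.span F t)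
    (h : ∀ a ∈ s, ∀ b ∈ t, a * b ∈ p) : x * y ∈ p := by
  have hxy := Submodule.apply_mem_map₂ (LinearMap.mul F A) hx hy
  rw [Submodule.map₂_span_span] at hxy
  refine Submodule.span_le.mpr ?_ hxy
  rintro _ ⟨a, ha, b, hb, rfl⟩
  exact h a ha b hb

theorem mul_mem_Lspan {i j : ℕ} {x y : A} (hx : x ∈ Lspan F S i) (hy : y ∈ Lspan F S j) :
    x * y ∈ Lspan F S (i + j) := by
  refine mul_mem_of_mem_span hx hy ?_
  rintro _ ⟨w₁, hw₁, hl₁, rfl⟩ _ ⟨w₂, hw₂, hl₂, rfl⟩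
  exact Submodule.subset_span ⟨w₁ * w₂, hasLeavesIn_mul_iff.mpr ⟨hw₁, hw₂⟩,
    by rw [wlen_mul]; omega, rfl⟩

theorem evalVar_mem_Lspan {n : ℕ} {v : Fin n → A} {ℓ : Fin n → ℕ}
    (hv : ∀ i, v i ∈ Lspan F S (ℓ i)) (z : FreeMagma (Fin n)) :
    evalVar v z ∈ Lspan F S (weight ℓ z) := by
  induction z with
  | ih1 i => simpa using hv i
  | ih2 x y ihx ihy =>
    rw [evalVar_mul, weight_mul]
    exact mul_mem_Lspan ihx ihy

end Span

section Mixing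
variable {F A : Type*} [Field F] [NonUnitalNonAssocRing A] [Module F A]
  [SMulCommClass F A A] [IsScalarTower F A A] {S : Set A} {n : ℕ}

theorem mul_mem_boundedSpan_of_three_le (hmix : IsKMixing F A 3)
    (hL : ∀ m < n, Lspan F S m ≤ boundedSpan F S m)
    {c d : FreeMagma A} (hc : HasLeavesIn S c) (hd : HasLeavesIn S d) (hc3 : 3 ≤ wlen c)
    (hcd : wlen c + wlen d ≤ n)
    (hshort : ∀ i j, i + j ≤ n → min i j < wlen c →
      ∀ x ∈ boundedSpan F S i, ∀ y ∈ boundedSpan F S j, x * y ∈ boundedSpan F S n) :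
    evalA d * evalA c ∈ boundedSpan F S n ∧ evalA c * evalA d ∈ boundedSpan F S n := by
  obtain ⟨u, q, hu, hq, hqlen, hqeval⟩ := exists_three_split hc hc3
  set v : Fin 4 → A := Fin.cons (evalA d) fun i => evalA (q i)
  set ℓ : Fin 4 → ℕ := Fin.cons (wlen d) fun i => wlen (q i)
  have hℓ : ∀ i, 0 < ℓ i := Fin.cases (wlen_pos d) fun i => wlen_pos (q i)
  have hv : ∀ i, v i ∈ Lspan F S (ℓ i) :=
    Fin.cases (evalA_mem_Lspan hd) fun i => evalA_mem_Lspan (hq i)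
  have hsum : ∑ i, ℓ i = wlen d + wlen c := by simp [ℓ, Fin.sum_univ_succ, hqlen]
  have hsucc : ∑ i : Fin 3, ℓ i.succ = wlen c := by simp [ℓ, hqlen]
  have hmem : ∀ z, weight ℓ z < n → evalVar v z ∈ boundedSpan F S (weight ℓ z) :=
    fun z hz => hL _ hz (evalVar_mem_Lspan hv z)
  have hD0 : Submodule.span F {a | ∃ z, InD0 z ∧ evalVar v z = a} ≤ boundedSpan F S n := by
    rw [Submodule.span_le]
    rintro _ ⟨z, hz, rfl⟩
    rcases hz.weight_lt_or_exists_mul (by norm_num) hℓ with hlt | ⟨z₁, z₂, rfl, hmin⟩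
    · replace hlt := hlt.trans_eq hsum
      exact boundedSpan_mono (by omega) (hmem z (by omega))
    · replace hmin := hmin.trans_eq hsucc
      have hle := (weight_le_sum (ℓ := ℓ) (Multiset.coe_nodup.mp hz.1)
        (fun a _ => Finset.mem_univ a)).trans_eq hsum
      have h₁ := weight_pos hℓ z₁
      have h₂ := weight_pos hℓ z₂
      rw [weight_mul] at hle
      exact hshort _ _ (by omega) (by omega) _ (hmem z₁ (by omega)) _ (hmem z₂ (by omega))
  constructor
  · have h := hmix (evalA d) (fun i => evalA (q i)) (.of 0 * u) ⟨u, hu, Or.inl rfl⟩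
    rw [evalVar_mul, hqeval] at h
    exact hD0 h
  · have h := hmix (evalA d) (fun i => evalA (q i)) (u * .of 0) ⟨u, hu, Or.inr rfl⟩
    rw [evalVar_mul, hqeval] at h
    exact hD0 h

theorem mul_mem_boundedSpan (hmix : IsKMixing F A 3)
    (hL : ∀ m < n, Lspan F S m ≤ boundedSpan F S m) {i j : ℕ} (hij : i + j ≤ n) {x y : A}
    (hx : x ∈ boundedSpan F S i) (hy : y ∈ boundedSpan F S j) : x * y ∈ boundedSpan F S n := by
  induction hs : min i j using Nat.strong_induction_on generalizing i j x y with
  | _ s ih =>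
  refine mul_mem_of_mem_span hx hy ?_
  rintro _ ⟨a, ha, hka, hla, rfl⟩ _ ⟨b, hb, hkb, hlb, rfl⟩
  by_cases h3 : wlen a < 3 ∨ wlen b < 3
  · exact Submodule.subset_span ⟨a * b, hasLeavesIn_mul_iff.mpr ⟨ha, hb⟩,
      kBounded_mul hka hkb h3, by rw [wlen_mul]; omega, rfl⟩
  simp only [not_or, not_lt] at h3
  have hshort : ∀ c : FreeMagma A, wlen c ≤ s → ∀ i' j', i' + j' ≤ n → min i' j' < wlen c →
      ∀ x ∈ boundedSpan F S i', ∀ y ∈ boundedSpan F S j', x * y ∈ boundedSpan F S n :=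
    fun c hc i' j' hij' hlt x hx y hy => ih _ (by omega) hij' hx hy rfl
  rcases le_total (wlen a) (wlen b) with hab | hab
  · exact (mul_mem_boundedSpan_of_three_le hmix hL ha hb h3.1 (by omega)
      (hshort a (by omega))).2
  · exact (mul_mem_boundedSpan_of_three_le hmix hL hb ha h3.2 (by omega)
      (hshort b (by omega))).1

theorem Lspan_le_boundedSpan (hmix : IsKMixing F A 3) (n : ℕ) :
    Lspan F S n ≤ boundedSpan F S n := by
  induction n using Nat.strong_induction_on with
  | _ n ih =>
  rw [Lspan, Submodule.span_le]
  rintro _ ⟨w, hw, hwn, rfl⟩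
  cases w with
  | of a => exact Submodule.subset_span ⟨.of a, hw, kBounded_of a, hwn, rfl⟩
  | mul w₁ w₂ =>
    rw [show w₁.mul w₂ = w₁ * w₂ from rfl, hasLeavesIn_mul_iff] at *
    rw [wlen_mul] at hwn
    have := wlen_pos w₁
    have := wlen_pos w₂
    exact mul_mem_boundedSpan hmix ih hwn (ih _ (by omega) (evalA_mem_Lspan hw.1))
      (ih _ (by omega) (evalA_mem_Lspan hw.2))

end Mixing

section Length
variable {F A : Type*} [Field F] [NonUnitalNonAssocRing A] [Module F A] {S : Set A}

theorem Lspan_one_ne_bot [Nontrivial A] (hgen : Generates F S) : Lspan F S 1 ≠ ⊥ := by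
  intro h
  have hS : ∀ a ∈ S, a = 0 := fun a ha =>
    (Submodule.mem_bot F).mp (h ▸ evalA_mem_Lspan (w := .of a) (by simpa [HasLeavesIn] using ha))
  have hzero : ∀ w, HasLeavesIn S w → evalA w = 0 := by
    intro w
    induction w with
    | ih1 a => exact fun hw => hS a (hw a (by simp))
    | ih2 x y ihx _ =>
      intro hw
      rw [evalA_mul, ihx (hasLeavesIn_mul_iff.mp hw).1, zero_mul]
  refine bot_ne_top (α := Submodule F A) (eq_top_iff.mpr ?_)
  rw [← hgen, Submodule.span_le]
  rintro _ ⟨w, hw, rfl⟩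
  simp [hzero w hw]

variable [SMulCommClass F A A] [IsScalarTower F A A]

theorem Lspan_add_three_le (hmix : IsKMixing F A 3) {t m : ℕ}
    (h₁ : Lspan F S (t + 1) ≤ Lspan F S t) (h₂ : Lspan F S (t + 2) ≤ Lspan F S t)
    (hm : Lspan F S (m + 2) ≤ Lspan F S t) : Lspan F S (m + 3) ≤ Lspan F S t := by
  have hshort : ∀ i ≤ 2, Lspan F S (t + i) ≤ Lspan F S t := by
    intro i hi
    interval_cases i
    exacts [le_rfl, h₁, h₂]
  refine (Lspan_le_boundedSpan hmix _).trans (Submodule.span_le.mpr ?_)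
  rintro _ ⟨w, hw, hwb, hwm, rfl⟩
  rcases Nat.lt_or_ge (wlen w) (m + 3) with hlt | hge
  · exact hm (Lspan_mono (by omega) (evalA_mem_Lspan hw))
  obtain ⟨u, c, rfl | rfl, hc⟩ := hwb.exists_mul (by omega) <;>
    rw [hasLeavesIn_mul_iff] at hw <;> rw [wlen_mul] at hwm hge <;> have := wlen_pos c
  · have hu : evalA u ∈ Lspan F S t := hm (Lspan_mono (by omega) (evalA_mem_Lspan hw.1))
    exact hshort _ (by omega) (mul_mem_Lspan hu (evalA_mem_Lspan hw.2))
  · have hu : evalA u ∈ Lspan F S t := hm (Lspan_mono (by omega) (evalA_mem_Lspan hw.2))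
    have hcu := mul_mem_Lspan (evalA_mem_Lspan hw.1) hu
    rw [add_comm] at hcu
    exact hshort _ (by omega) hcu

theorem Lspan_eq_top_of_plateau (hmix : IsKMixing F A 3) (hgen : Generates F S) {t : ℕ}
    (h₁ : Lspan F S (t + 1) ≤ Lspan F S t) (h₂ : Lspan F S (t + 2) ≤ Lspan F S t) :
    Lspan F S t = ⊤ := by
  have hstable : ∀ m, Lspan F S (t + m + 2) ≤ Lspan F S t := by
    intro m
    induction m with
    | zero => exact h₂
    | succ m ih => exact Lspan_add_three_le hmix h₁ h₂ ih
  rw [eq_top_iff, ← hgen, Submodule.span_le]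
  rintro _ ⟨w, hw, rfl⟩
  exact hstable (wlen w) (Lspan_mono (by omega) (evalA_mem_Lspan hw))

theorem Lspan_lt_Lspan_add_two (hmix : IsKMixing F A 3) (hgen : Generates F S) {t : ℕ}
    (ht : Lspan F S t ≠ ⊤) : Lspan F S t < Lspan F S (t + 2) :=
  (Lspan_mono (by omega)).lt_of_ne fun h =>
    ht (Lspan_eq_top_of_plateau hmix hgen (h ▸ Lspan_mono (by omega)) h.ge)

theorem Lspan_eq_top_or_le_finrank [Nontrivial A] [FiniteDimensional F A]
    (hmix : IsKMixing F A 3) (hgen : Generates F S) (j : ℕ) :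
    Lspan F S (2 * j + 1) = ⊤ ∨ j + 1 ≤ Module.finrank F (Lspan F S (2 * j + 1)) := by
  induction j with
  | zero =>
    refine Or.inr (Nat.one_le_iff_ne_zero.mpr fun h0 => Lspan_one_ne_bot hgen ?_)
    exact Submodule.finrank_eq_zero.mp h0
  | succ j ih =>
    by_cases htop : Lspan F S (2 * (j + 1) + 1) = ⊤
    · exact Or.inl htop
    have hne : Lspan F S (2 * j + 1) ≠ ⊤ := fun h =>
      htop (eq_top_iff.mpr (h ▸ Lspan_mono (by omega)))
    have hlt := Submodule.finrank_lt_finrank_of_lt (Lspan_lt_Lspan_add_two hmix hgen hne)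
    have hj := ih.resolve_left hne
    exact Or.inr (by rw [show 2 * (j + 1) + 1 = 2 * j + 1 + 2 by ring]; omega)

theorem lenS_le_two_mul_finrank [FiniteDimensional F A] (hmix : IsKMixing F A 3)
    (hgen : Generates F S) : lenS F S ≤ 2 * Module.finrank F A := by
  refine Nat.sInf_le (show Lspan F S (2 * Module.finrank F A) = ⊤ from ?_)
  cases subsingleton_or_nontrivial A with
  | inl _ => exact Subsingleton.elim _ _
  | inr _ =>
    have hd := Module.finrank_pos (R := F) (M := A)
    refine eq_top_iff.mpr (le_trans ?_
      (Lspan_mono (by omega : 2 * (Module.finrank F A - 1) + 1 ≤ _)))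
    rcases Lspan_eq_top_or_le_finrank hmix hgen (Module.finrank F A - 1) with h | h
    · exact h.ge
    · exact (Submodule.eq_top_of_finrank_eq (le_antisymm (Submodule.finrank_le _) (by omega))).ge

end Length

section Statement
variable {F A : Type*} [Field F] [NonUnitalNonAssocRing A] [Module F A]
  [SMulCommClass F A A] [IsScalarTower F A A]

theorem stmt1
    (hchar : (2 : F) ≠ 0)
    (hanti : ∀ x y : A, x * y = -(y * x))
    (hmal : ∀ x y z : A, (x*y)*(x*z) = ((x*y)*z)*x + ((y*z)*x)*x + ((z*x)*x)*y) :
    IsKMixing F A 3 ∧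
    (∀ d : ℕ, FiniteDimensional F A → Module.finrank F A = d → 2 ≤ d →
      ∀ S : Set A, S.Finite → Generates F S → lenS F S ≤ 2 * d) := by
  have hmix := isKMixing_three_of_malcev hchar hanti hmal
  exact ⟨hmix, fun d _ hd _ S _ hgen => hd ▸ lenS_le_two_mul_finrank hmix hgen⟩

end Statement

end P
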